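/- arXiv:2112.03741 — 3 statements merged into one kernel-verified Lean document; each statement's English description precedes it below -/
import Mathlib

section
/- Let N be a positive integer and let d, d' be positive divisors of N. Then the rational number a_N(d,d') := (N / gcd(d, N/d)) · gcd(d,d')^2 / (d·d') is a positive integer; equivalently, gcd(d, N/d) · d · d' divides N · gcd(d,d')^2. -/
/-! Since `gcd(d, N/d) · d = gcd(d², N)`, the left side is `gcd(d²d', Nd')` and the right side is
`gcd(Nd², Nd'²)`; both `d²d'` and `Nd'` divide each of `Nd²` and `Nd'²` because `d' ∣ N`. -/

namespace Nat

theorem gcd_div_mul_self_of_dvd {d N : ℕ} (hd : d ∣ N) : gcd d (N / d) * d = gcd (d ^ 2) N := by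
  rw [mul_comm, ← gcd_mul_left, ← sq, Nat.mul_div_cancel' hd]

theorem gcd_div_mul_self_mul_dvd_mul_gcd_sq {N d d' : ℕ} (hd : d ∣ N) (hd' : d' ∣ N) :
    gcd d (N / d) * d * d' ∣ N * gcd d d' ^ 2 := by
  rw [gcd_div_mul_self_of_dvd hd, ← gcd_mul_right, ← pow_gcd_pow, ← gcd_mul_left]
  refine dvd_gcd ((gcd_dvd_left _ _).trans ?_) ((gcd_dvd_right _ _).trans ?_)
  · rw [mul_comm N]
    exact mul_dvd_mul_left _ hd'
  · exact mul_dvd_mul_left N (dvd_pow_self d' two_ne_zero)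

end Nat

/-- For a positive integer `N` and divisors `d, d'` of `N`, the quantity
`a_N(d,d') = (N/gcd(d,N/d)) · gcd(d,d')^2/(d·d')` is a positive integer;
equivalently `gcd(d,N/d)·d·d'` divides `N·gcd(d,d')^2`. -/
theorem stmt_0 (N d d' : ℕ) (hN : 0 < N) (hd : d ∣ N) (hd' : d' ∣ N) :
    (∃ a : ℕ, 0 < a ∧
      (a : ℚ) = ((N : ℚ) / (Nat.gcd d (N / d) : ℚ)) *
        ((Nat.gcd d d' : ℚ) ^ 2 / ((d : ℚ) * (d' : ℚ)))) ∧
    Nat.gcd d (N / d) * d * d' ∣ N * Nat.gcd d d' ^ 2 := by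
  have hdvd := Nat.gcd_div_mul_self_mul_dvd_mul_gcd_sq hd hd'
  have hd0 : 0 < d := Nat.pos_of_dvd_of_pos hd hN
  have hd'0 : 0 < d' := Nat.pos_of_dvd_of_pos hd' hN
  refine ⟨⟨N * Nat.gcd d d' ^ 2 / (Nat.gcd d (N / d) * d * d'), ?_, ?_⟩, hdvd⟩
  · exact Nat.div_pos (Nat.le_of_dvd (by positivity) hdvd) (by positivity)
  · rw [Nat.cast_div hdvd (by positivity)]
    push_cast
    ring
end

section
/- Let N be a positive integer and d' a fixed positive divisor of N. Then Σ_{d | N} φ(gcd(d, N/d)) · (N/gcd(d, N/d)) · gcd(d,d')^2/(d·d') = (N/rad(N)) · Π_{p | N, p prime} (p+1), where φ is Euler's totient function and rad(N) is the product of the distinct primes dividing N. (Both sums and products range over positive divisors d of N and primes p dividing N respectively.) -/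
open Finset

/-! Both sides are multiplicative in `N`, with `d'` splitting along a coprime factorization of `N`,
so it suffices to take `N = p ^ k` and `d' = p ^ j`. There the term of `d = p ^ i` is
`p ^ k * c_i * p ^ (-|i - j|)`, where `c_i = 1` at the endpoints `i = 0, k` and `c_i = 1 - 1/p`
in between, and summing the two geometric series on either side of `j` gives `p ^ k * (1 + 1/p)`. -/

theorem Nat.gcd_pow_pow_eq_pow_min (p a b : ℕ) : Nat.gcd (p ^ a) (p ^ b) = p ^ min a b := by
  rcases le_total a b with h | h
  · rw [min_eq_left h, Nat.gcd_eq_left (pow_dvd_pow p h)]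
  · rw [min_eq_right h, Nat.gcd_eq_right (pow_dvd_pow p h)]

theorem Nat.Coprime.gcd_mul_mul {a b x₁ x₂ y₁ y₂ : ℕ} (hab : a.Coprime b)
    (hx₁ : x₁ ∣ a) (hy₁ : y₁ ∣ a) (hx₂ : x₂ ∣ b) (hy₂ : y₂ ∣ b) :
    Nat.gcd (x₁ * x₂) (y₁ * y₂) = Nat.gcd x₁ y₁ * Nat.gcd x₂ y₂ := by
  have cop : ∀ {u v : ℕ}, u ∣ a → v ∣ b → u.Coprime v := fun hu hv =>
    (hab.coprime_dvd_left hu).coprime_dvd_right hv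
  rw [Nat.Coprime.gcd_mul _ (cop hy₁ hy₂), Nat.Coprime.gcd_mul_right_cancel _ (cop hy₁ hx₂).symm,
    Nat.Coprime.gcd_mul_left_cancel _ (cop hx₁ hy₂)]

theorem Nat.Coprime.sum_divisors_mul_eq_sum_sum {M : Type*} [AddCommMonoid M] {a b : ℕ}
    (hab : a.Coprime b) (f : ℕ → M) :
    ∑ d ∈ (a * b).divisors, f d = ∑ x ∈ a.divisors, ∑ y ∈ b.divisors, f (x * y) := by
  rw [hab.divisors_mul, sum_map, ← sum_product']
  exact sum_attach _ fun p : ℕ × ℕ => f (p.1 * p.2)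

theorem geom_sum_pow_dist_mul_one_sub {R : Type*} [CommRing R] (x : R) {j k : ℕ} (hjk : j ≤ k) :
    (∑ i ∈ range (k + 1), x ^ Nat.dist i j) * (1 - x) = 1 + x - x ^ (j + 1) - x ^ (k + 1 - j) := by
  obtain ⟨l, rfl⟩ := Nat.exists_eq_add_of_le hjk
  have hleft : ∑ i ∈ range (j + 1), x ^ Nat.dist i j = ∑ i ∈ range (j + 1), x ^ i := by
    rw [← sum_range_reflect]
    refine sum_congr rfl fun i hi => ?_
    rw [mem_range] at hi
    rw [Nat.dist_eq_sub_of_le (by omega)]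
    congr 1
    omega
  have hright : ∑ i ∈ range l, x ^ Nat.dist (j + 1 + i) j = x * ∑ i ∈ range l, x ^ i := by
    rw [mul_sum]
    refine sum_congr rfl fun i _ => ?_
    rw [Nat.dist_eq_sub_of_le_right (by omega), ← pow_succ']
    congr 1
    omega
  rw [show j + l + 1 = j + 1 + l by omega, sum_range_add, hleft, hright, add_mul,
    geom_sum_mul_neg, mul_assoc, geom_sum_mul_neg, show j + 1 + l - j = l + 1 by omega, pow_succ']
  ring

theorem sum_range_ite_mul_pow_dist {R : Type*} [CommRing R] (x : R) {j k : ℕ} (hk : 0 < k)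
    (hjk : j ≤ k) :
    ∑ i ∈ range (k + 1), (if i = 0 ∨ i = k then 1 else 1 - x) * x ^ Nat.dist i j = 1 + x := by
  obtain ⟨K, rfl⟩ : ∃ K, k = K + 1 := ⟨k - 1, by omega⟩
  have hgeom := geom_sum_pow_dist_mul_one_sub x hjk
  rw [sum_range_succ, sum_range_succ'] at hgeom ⊢
  rw [sum_congr rfl fun i (hi : i ∈ range K) => by rw [if_neg (by simp at hi; omega)]]
  simp only [true_or, or_true, if_true, one_mul, Nat.dist_zero_left,
    Nat.dist_eq_sub_of_le_right hjk, ← mul_sum] at hgeom ⊢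
  rw [show K + 1 + 1 - j = K + 1 - j + 1 by omega, pow_succ x (K + 1 - j)] at hgeom
  linear_combination hgeom

/-- `cuspOrder N d' d` is the paper's `a_N(d, d')`. -/
noncomputable def cuspOrder (N e d : ℕ) : ℚ :=
  ((N : ℚ) / (Nat.gcd d (N / d) : ℚ)) * ((Nat.gcd d e : ℚ) ^ 2 / ((d : ℚ) * (e : ℚ)))

noncomputable def totalCuspOrder (N e : ℕ) : ℚ :=
  ∑ d ∈ N.divisors, (Nat.totient (Nat.gcd d (N / d)) : ℚ) * cuspOrder N e d

noncomputable def gammaZeroIndex (N : ℕ) : ℚ :=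
  ((N : ℚ) / ∏ p ∈ N.primeFactors, (p : ℚ)) * ∏ p ∈ N.primeFactors, ((p : ℚ) + 1)

section Multiplicativity

variable {a b : ℕ}

theorem Nat.Coprime.gcd_mul_div_mul {d₁ d₂ : ℕ} (hab : a.Coprime b) (hd₁ : d₁ ∣ a)
    (hd₂ : d₂ ∣ b) :
    Nat.gcd (d₁ * d₂) (a * b / (d₁ * d₂)) = Nat.gcd d₁ (a / d₁) * Nat.gcd d₂ (b / d₂) := by
  rw [← Nat.div_mul_div_comm hd₁ hd₂,
    hab.gcd_mul_mul hd₁ (Nat.div_dvd_of_dvd hd₁) hd₂ (Nat.div_dvd_of_dvd hd₂)]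

theorem cuspOrder_mul {d₁ d₂ e₁ e₂ : ℕ} (hab : a.Coprime b) (hd₁ : d₁ ∣ a) (hd₂ : d₂ ∣ b)
    (he₁ : e₁ ∣ a) (he₂ : e₂ ∣ b) :
    cuspOrder (a * b) (e₁ * e₂) (d₁ * d₂) = cuspOrder a e₁ d₁ * cuspOrder b e₂ d₂ := by
  rw [cuspOrder, cuspOrder, cuspOrder, hab.gcd_mul_div_mul hd₁ hd₂,
    hab.gcd_mul_mul hd₁ he₁ hd₂ he₂]
  push_cast
  ring

theorem totalCuspOrder_mul {e₁ e₂ : ℕ} (hab : a.Coprime b) (he₁ : e₁ ∣ a) (he₂ : e₂ ∣ b) :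
    totalCuspOrder (a * b) (e₁ * e₂) = totalCuspOrder a e₁ * totalCuspOrder b e₂ := by
  rw [totalCuspOrder, hab.sum_divisors_mul_eq_sum_sum, totalCuspOrder, totalCuspOrder,
    sum_mul_sum]
  refine sum_congr rfl fun d₁ hd₁ => sum_congr rfl fun d₂ hd₂ => ?_
  have hd₁ := Nat.dvd_of_mem_divisors hd₁
  have hd₂ := Nat.dvd_of_mem_divisors hd₂
  have hcop : (Nat.gcd d₁ (a / d₁)).Coprime (Nat.gcd d₂ (b / d₂)) :=
    (hab.coprime_dvd_left ((Nat.gcd_dvd_left _ _).trans hd₁)).coprime_dvd_right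
      ((Nat.gcd_dvd_left _ _).trans hd₂)
  rw [hab.gcd_mul_div_mul hd₁ hd₂, Nat.totient_mul hcop, cuspOrder_mul hab hd₁ hd₂ he₁ he₂]
  push_cast
  ring

theorem gammaZeroIndex_mul (hab : a.Coprime b) :
    gammaZeroIndex (a * b) = gammaZeroIndex a * gammaZeroIndex b := by
  rw [gammaZeroIndex, gammaZeroIndex, gammaZeroIndex, hab.primeFactors_mul,
    prod_union hab.disjoint_primeFactors, prod_union hab.disjoint_primeFactors]
  push_cast
  ring

end Multiplicativity

section PrimePower

variable {p : ℕ}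

theorem totient_mul_cuspOrder_prime_pow (hp : p.Prime) {i j k : ℕ} (hik : i ≤ k) :
    (Nat.totient (Nat.gcd (p ^ i) (p ^ k / p ^ i)) : ℚ) * cuspOrder (p ^ k) (p ^ j) (p ^ i) =
      p ^ k * ((if i = 0 ∨ i = k then 1 else 1 - (p : ℚ)⁻¹) * (p : ℚ)⁻¹ ^ Nat.dist i j) := by
  have hp₀ : (p : ℚ) ≠ 0 := Nat.cast_ne_zero.mpr hp.ne_zero
  have htotient : (Nat.totient (p ^ min i (k - i)) : ℚ) * (p ^ k / p ^ min i (k - i)) =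
      p ^ k * (if i = 0 ∨ i = k then 1 else 1 - (p : ℚ)⁻¹) := by
    rw [Nat.totient_eq_mul_prod_factors]
    split_ifs with h
    · rw [show min i (k - i) = 0 by omega]
      simp
    · rw [Nat.primeFactors_prime_pow (by omega) hp, prod_singleton]
      push_cast
      field_simp
  have hgcd : (p : ℚ) ^ (2 * min i j) / (p ^ i * p ^ j) = (p : ℚ)⁻¹ ^ Nat.dist i j := by
    rw [← pow_add, show i + j = 2 * min i j + Nat.dist i j by unfold Nat.dist; omega, pow_add,
      inv_pow]
    field_simp
  rw [cuspOrder, Nat.pow_div hik hp.pos, Nat.gcd_pow_pow_eq_pow_min, Nat.gcd_pow_pow_eq_pow_min,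
    ← hgcd]
  push_cast
  linear_combination (p : ℚ) ^ (2 * min i j) / (p ^ i * p ^ j) * htotient

theorem totalCuspOrder_prime_pow (hp : p.Prime) {j k : ℕ} (hk : 0 < k) (hjk : j ≤ k) :
    totalCuspOrder (p ^ k) (p ^ j) = gammaZeroIndex (p ^ k) := by
  have hp₀ : (p : ℚ) ≠ 0 := Nat.cast_ne_zero.mpr hp.ne_zero
  rw [totalCuspOrder, Nat.sum_divisors_prime_pow hp,
    sum_congr rfl fun i hi => totient_mul_cuspOrder_prime_pow hp (Nat.lt_succ_iff.mp
      (mem_range.mp hi)), ← mul_sum, sum_range_ite_mul_pow_dist _ hk hjk, gammaZeroIndex,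
    Nat.primeFactors_prime_pow hk.ne' hp, prod_singleton, prod_singleton]
  push_cast
  field_simp

end PrimePower

theorem totalCuspOrder_eq_gammaZeroIndex {N e : ℕ} (hN : 0 < N) (he : e ∣ N) :
    totalCuspOrder N e = gammaZeroIndex N := by
  induction N using Nat.recOnPosPrimePosCoprime generalizing e with
  | prime_pow p k hp hk =>
    obtain ⟨j, hjk, rfl⟩ := (Nat.dvd_prime_pow hp).mp he
    exact totalCuspOrder_prime_pow hp hk hjk
  | zero => exact absurd hN (lt_irrefl 0)
  | one =>
    obtain rfl := Nat.dvd_one.mp he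
    simp [totalCuspOrder, gammaZeroIndex, cuspOrder]
  | coprime a b ha hb hab iha ihb =>
    rw [← (Nat.gcd_mul_gcd_eq_iff_dvd_mul_of_coprime hab).mpr he,
      totalCuspOrder_mul hab (Nat.gcd_dvd_right e a) (Nat.gcd_dvd_right e b),
      gammaZeroIndex_mul hab,
      iha (by omega) (Nat.gcd_dvd_right e a), ihb (by omega) (Nat.gcd_dvd_right e b)]

/-- The total order of vanishing of `Δ(d'z)` on `X₀(N)` summed over all cusps equals
the index `[SL₂(ℤ) : Γ₀(N)] = (N/rad N)·Π_{p|N}(p+1)`. -/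
theorem stmt_1 (N d' : ℕ) (hN : 0 < N) (hd' : d' ∣ N) :
    ∑ d ∈ N.divisors,
      (Nat.totient (Nat.gcd d (N / d)) : ℚ) *
        (((N : ℚ) / (Nat.gcd d (N / d) : ℚ)) *
          ((Nat.gcd d d' : ℚ) ^ 2 / ((d : ℚ) * (d' : ℚ)))) =
    ((N : ℚ) / (∏ p ∈ N.primeFactors, (p : ℚ))) * ∏ p ∈ N.primeFactors, ((p : ℚ) + 1) :=
  totalCuspOrder_eq_gammaZeroIndex hN hd'
end

section
/- Let N be a positive integer with σ_0(N) positive divisors. The σ_0(N) × σ_0(N) rational matrix Λ(N) whose rows and columns are indexed by the positive divisors of N, with (d,d')-entry equal to (1/24)·(N/gcd(d, N/d))·gcd(d,d')^2/(d·d'), is invertible over ℚ. -/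
/-!
Write `Λ(N) = D · G · D'` with `D`, `D'` invertible diagonal matrices and `G = (gcd(d, d')²)` the
square-GCD matrix on the divisors of `N`. Since `n² = ∑_{e ∣ n} J₂(e)` for Jordan's totient
`J₂ = μ * id²`, Smith's factorisation gives `G = Z · diag(J₂) · Zᵀ` with `Z = ([e ∣ d])` unitriangular,
so `det G = ∏_{e ∣ N} J₂(e)`. Finally `J₂` is multiplicative with `J₂(p^(m+1)) = p^(2m+2) - p^(2m) > 0`.
-/

open ArithmeticFunction Finset Matrix
open scoped ArithmeticFunction.Moebius ArithmeticFunction.zeta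

namespace ArithmeticFunction

def jordanTotient (k : ℕ) : ArithmeticFunction ℤ :=
  μ * ((pow k : ArithmeticFunction ℕ) : ArithmeticFunction ℤ)

theorem isMultiplicative_jordanTotient (k : ℕ) : IsMultiplicative (jordanTotient k) :=
  isMultiplicative_moebius.mul isMultiplicative_pow.natCast

theorem sum_divisors_jordanTotient (k : ℕ) {n : ℕ} (hn : n ≠ 0) :
    ∑ d ∈ n.divisors, jordanTotient k d = (n : ℤ) ^ k := by
  rw [← coe_zeta_mul_apply, jordanTotient, ← mul_assoc, coe_zeta_mul_moebius, one_mul,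
    natCoe_apply, pow_apply, if_neg (fun h => hn h.2), Nat.cast_pow]

theorem jordanTotient_apply_prime_pow (k : ℕ) {p : ℕ} (hp : p.Prime) (m : ℕ) :
    jordanTotient k (p ^ (m + 1)) = (p : ℤ) ^ (k * (m + 1)) - (p : ℤ) ^ (k * m) := by
  have hsum (i : ℕ) : ∑ j ∈ range (i + 1), jordanTotient k (p ^ j) = (p : ℤ) ^ (k * i) := by
    rw [← Nat.sum_divisors_prime_pow hp, sum_divisors_jordanTotient k (pow_ne_zero i hp.ne_zero),
      Nat.cast_pow, ← pow_mul, mul_comm]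
  rw [← hsum (m + 1), sum_range_succ, hsum m, add_sub_cancel_left]

theorem jordanTotient_pos {k n : ℕ} (hk : k ≠ 0) (hn : n ≠ 0) : 0 < jordanTotient k n := by
  rw [(isMultiplicative_jordanTotient k).multiplicative_factorization _ hn]
  refine prod_pos fun p hp => ?_
  obtain ⟨m, hm⟩ := Nat.exists_eq_succ_of_ne_zero (Finsupp.mem_support_iff.1 hp)
  have hp' : p.Prime := Nat.prime_of_mem_primeFactors hp
  simp only [hm, jordanTotient_apply_prime_pow k hp', sub_pos]
  exact pow_lt_pow_right₀ (by exact_mod_cast hp'.one_lt) (by nlinarith [Nat.pos_of_ne_zero hk])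

end ArithmeticFunction

section SmithDeterminant

variable {R : Type*} [CommRing R] (N : ℕ)

def divisibilityMatrix : Matrix N.divisors N.divisors R :=
  of fun d e => if (e : ℕ) ∣ d then 1 else 0

theorem det_divisibilityMatrix : (divisibilityMatrix N : Matrix _ _ R).det = 1 := by
  rw [det_of_isLowerTriangular _ fun d e hde => ?_]
  · simp [divisibilityMatrix]
  · have hlt : (d : ℕ) < e := hde
    simp [divisibilityMatrix, Nat.not_dvd_of_pos_of_lt (Nat.pos_of_mem_divisors d.2) hlt]

theorem divisibilityMatrix_mul_diagonal_mul_transpose (g : ℕ → R) :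
    divisibilityMatrix N * diagonal (fun e : N.divisors => g e) * (divisibilityMatrix N)ᵀ =
      of fun d d' : N.divisors => ∑ e ∈ (Nat.gcd d d').divisors, g e := by
  ext d d'
  have hN : N ≠ 0 := Nat.ne_zero_of_mem_divisors d.2
  have hgcd : Nat.gcd d d' ∣ N := (Nat.gcd_dvd_left _ _).trans (Nat.dvd_of_mem_divisors d.2)
  rw [Matrix.mul_apply]
  simp only [divisibilityMatrix, mul_diagonal, transpose_apply, of_apply]
  rw [← Nat.divisors_filter_dvd_of_dvd hN hgcd, sum_filter, ← sum_coe_sort N.divisors]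
  refine sum_congr rfl fun e _ => ?_
  by_cases h1 : (e : ℕ) ∣ d <;> by_cases h2 : (e : ℕ) ∣ d' <;> simp [h1, h2, Nat.dvd_gcd_iff]

theorem det_sum_divisors_gcd (g : ℕ → R) :
    (of fun d d' : N.divisors => ∑ e ∈ (Nat.gcd d d').divisors, g e).det =
      ∏ e : N.divisors, g e := by
  rw [← divisibilityMatrix_mul_diagonal_mul_transpose, det_mul, det_mul, det_transpose,
    det_divisibilityMatrix, det_diagonal, one_mul, mul_one]

end SmithDeterminant

theorem stmt_3_general (N : ℕ) :
    IsUnit (Matrix.det (fun (d d' : {m : ℕ // m ∈ N.divisors}) =>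
      (1 / 24 : ℚ) * (((N : ℚ) / (Nat.gcd (d : ℕ) (N / (d : ℕ)) : ℚ)) *
        ((Nat.gcd (d : ℕ) (d' : ℕ) : ℚ) ^ 2 / (((d : ℕ) : ℚ) * ((d' : ℕ) : ℚ)))))) := by
  set J : ℕ → ℚ := fun e => jordanTotient 2 e
  have hsq (n : ℕ) (hn : n ≠ 0) : (n : ℚ) ^ 2 = ∑ e ∈ n.divisors, J e := by
    simpa [J] using congrArg (Int.cast : ℤ → ℚ) (sum_divisors_jordanTotient 2 hn).symm
  have hpos (d : N.divisors) : 0 < (d : ℕ) := Nat.pos_of_mem_divisors d.2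
  set c : N.divisors → ℚ := fun d => N / (24 * Nat.gcd d (N / d) * d)
  convert_to IsUnit (det (diagonal c * (of fun d d' : N.divisors =>
      ∑ e ∈ (Nat.gcd d d').divisors, J e) * diagonal fun d : N.divisors => ((d : ℕ) : ℚ)⁻¹)) using 2
  · refine congrArg det (funext₂ fun d d' => ?_)
    have := hpos d
    rw [mul_diagonal, diagonal_mul, of_apply, ← hsq _ (Nat.gcd_pos_of_pos_left _ this).ne']
    simp only [c]
    field_simp
  rw [det_mul, det_mul, det_diagonal, det_diagonal, det_sum_divisors_gcd, isUnit_iff_ne_zero]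
  refine mul_ne_zero (mul_ne_zero ?_ ?_) ?_ <;> refine prod_ne_zero_iff.2 fun d _ => ?_
  · have := hpos d
    have : N ≠ 0 := Nat.ne_zero_of_mem_divisors d.2
    positivity
  · exact Int.cast_ne_zero.2 (jordanTotient_pos two_ne_zero (hpos d).ne').ne'
  · have := hpos d
    positivity

open Matrix in
/-- Ligozat's matrix `Λ(N)`, with `(d,d')`-entry `a_N(d,d')/24`, indexed by the
positive divisors of `N`, is invertible over `ℚ`. -/
theorem stmt_3 (N : ℕ) (hN : 0 < N) :
    IsUnit (Matrix.det (fun (d d' : {m : ℕ // m ∈ N.divisors}) =>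
      (1 / 24 : ℚ) * (((N : ℚ) / (Nat.gcd (d : ℕ) (N / (d : ℕ)) : ℚ)) *
        ((Nat.gcd (d : ℕ) (d' : ℕ) : ℚ) ^ 2 / (((d : ℕ) : ℚ) * ((d' : ℕ) : ℚ)))))) :=
  stmt_3_general N
end
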